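/- Let G be a weighted arena, B ∈ ℕ, and G' its graph of utility up to B. For all strategies λ1 of Player 1 and λ2 of Player 2 in G: if the outcome of (Φ(λ1), Φ(λ2)) in G' is winning for Player 1, or u_1^G(λ1, λ2) ≤ B, then u_1^G(λ1, λ2) = u_1^{G'}(Φ(λ1), Φ(λ2)). -/

import Mathlib

open scoped ENat

/-- A strategy maps a finite play (history, current position last) to the chosen
next position. -/
abbrev Strat (S : Type) := List S → S

/-- A two-player turn-based game arena: an ownership function (`true` = Player 1,
`false` = Player 2), an initial position and a transition relation. -/
structure Arena (S : Type) where
  owner : S → Bool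
  init : S
  edge : S → S → Prop

namespace Arena

variable {S : Type}

/-- A strategy is valid if it always follows edges of the arena. -/
def Valid (A : Arena S) (σ : Strat S) : Prop :=
  ∀ l : List S, A.edge (l.getLastD A.init) (σ l)

/-- Combine the strategy `σi` of player `i` with the strategy `σo` of her
opponent into a strategy profile. -/
def pairFor (i : Bool) (σi σo : Strat S) : Bool → Strat S :=
  fun b => if b = i then σi else σo

/-- The prefix of length `n` of the outcome of a strategy profile. -/
def outList (A : Arena S) (σ : Bool → Strat S) : ℕ → List S
  | 0 => [A.init]
  | n + 1 =>
      let l := outList A σ n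
      l ++ [σ (A.owner (l.getLastD A.init)) l]

/-- The position reached after `n` rounds. -/
def cur (A : Arena S) (σ : Bool → Strat S) (n : ℕ) : S :=
  (A.outList σ n).getLastD A.init

/-- The total weight of a finite play. -/
def pathWeight (w : S → S → ℕ) (l : List S) : ℕ :=
  ((l.zip l.tail).map fun p => w p.1 p.2).sum

/-- `n` is the round of the first visit of the outcome to the target set `C`. -/
def firstVisit (A : Arena S) (C : Set S) (σ : Bool → Strat S) (n : ℕ) : Prop :=
  A.cur σ n ∈ C ∧ ∀ m < n, A.cur σ m ∉ C

/-- The utility of a strategy profile w.r.t. edge weights `w` and target set `C`: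
the sum of the weights up to the first visit to `C`, and `⊤` if `C` is never
visited. -/
noncomputable def util (A : Arena S) (w : S → S → ℕ) (C : Set S)
    (σ : Bool → Strat S) : ℕ∞ :=
  ⨅ (n : ℕ) (_ : A.firstVisit C σ n), (pathWeight w (A.outList σ n) : ℕ∞)

/-- A strategy of player `i` is winning if all its outcomes against valid
opposing strategies visit the target set `C`. -/
def Winning (A : Arena S) (C : Set S) (i : Bool) (σi : Strat S) : Prop :=
  ∀ σo : Strat S, A.Valid σo → ∃ n, A.cur (pairFor i σi σo) n ∈ C

/-- Best response value of player `i` against opposing strategy `σo`. -/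
noncomputable def br (A : Arena S) (w : S → S → ℕ) (C : Set S)
    (i : Bool) (σo : Strat S) : ℕ∞ :=
  ⨅ (σi : Strat S) (_ : A.Valid σi), A.util w C (pairFor i σi σo)

end Arena

/-- Regret of utility `u` w.r.t. best-response value `b`, with the convention
`⊤ - ⊤ = ⊤`. -/
noncomputable def regPairVal (u b : ℕ∞) : ℕ∞ := if u = ⊤ then ⊤ else u - b

namespace Arena

variable {S : Type}

/-- The regret of strategy `σi` of player `i`. -/
noncomputable def regOf (A : Arena S) (w : S → S → ℕ) (C : Set S)
    (i : Bool) (σi : Strat S) : ℕ∞ :=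
  ⨆ (σo : Strat S) (_ : A.Valid σo),
    regPairVal (A.util w C (pairFor i σi σo)) (A.br w C i σo)

/-- The minimal regret of player `i`. -/
noncomputable def regMin (A : Arena S) (w : S → S → ℕ) (C : Set S) (i : Bool) : ℕ∞ :=
  ⨅ (σi : Strat S) (_ : A.Valid σi), A.regOf w C i σi

end Arena

namespace Arena

variable {S : Type}

/-- Best value achievable from `s` when both players cooperate, in a
target-weighted arena with target set `C` and target weights `μ`. -/
noncomputable def best (A : Arena S) (μ : S → ℕ) (C : Set S) (s : S) : ℕ∞ :=
  ⨅ (t : S) (_ : t ∈ C ∧ Relation.ReflTransGen A.edge s t), (μ t : ℕ∞)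

/-- Best alternative for Player 1 of moving from `s` to `s'`. -/
noncomputable def ba (A : Arena S) (μ : S → ℕ) (C : Set S) (s s' : S) : ℕ∞ :=
  if A.owner s = true then
    ⨅ (s'' : S) (_ : A.edge s s'' ∧ s'' ≠ s'), A.best μ C s''
  else ⊤

/-- Best alternative along a finite path (minimum of the best alternatives of
its edges, `⊤` for paths without edges). -/
noncomputable def baPath (A : Arena S) (μ : S → ℕ) (C : Set S) (l : List S) : ℕ∞ :=
  ((l.zip l.tail).map fun p => A.ba μ C p.1 p.2).foldr min ⊤

/-- The graph of best alternatives `G'` of a target-weighted arena. -/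
noncomputable def baArena (A : Arena S) (μ : S → ℕ) (C : Set S) : Arena (S × ℕ∞) where
  owner := fun p => A.owner p.1
  init := (A.init, ⊤)
  edge := fun p q =>
    A.edge p.1 q.1 ∧
      q.2 = if A.owner p.1 = true then min p.2 (A.ba μ C p.1 q.1) else p.2

/-- Utility in a target-weighted arena: the weight of the first target visited,
`⊤` if no target is visited. -/
noncomputable def utilT (A : Arena S) (μ : S → ℕ∞) (C : Set S)
    (σ : Bool → Strat S) : ℕ∞ :=
  ⨅ (n : ℕ) (_ : A.firstVisit C σ n), μ (A.cur σ n)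

/-- Best response value of player `i` in a target-weighted arena. -/
noncomputable def brT (A : Arena S) (μ : S → ℕ∞) (C : Set S)
    (i : Bool) (σo : Strat S) : ℕ∞ :=
  ⨅ (σi : Strat S) (_ : A.Valid σi), A.utilT μ C (pairFor i σi σo)

/-- Regret of a strategy in a target-weighted arena. -/
noncomputable def regOfT (A : Arena S) (μ : S → ℕ∞) (C : Set S)
    (i : Bool) (σi : Strat S) : ℕ∞ :=
  ⨆ (σo : Strat S) (_ : A.Valid σo),
    regPairVal (A.utilT μ C (pairFor i σi σo)) (A.brT μ C i σo)

/-- Minimal regret of player `i` in a target-weighted arena. -/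
noncomputable def regMinT (A : Arena S) (μ : S → ℕ∞) (C : Set S) (i : Bool) : ℕ∞ :=
  ⨅ (σi : Strat S) (_ : A.Valid σi), A.regOfT μ C i σi

/-- The min-max value of player `i` in a target-weighted arena. -/
noncomputable def minmaxT (A : Arena S) (μ : S → ℕ∞) (C : Set S) (i : Bool) : ℕ∞ :=
  ⨅ (σi : Strat S) (_ : A.Valid σi), ⨆ (σo : Strat S) (_ : A.Valid σo),
    A.utilT μ C (pairFor i σi σo)

/-- The strategy mapping `Φ₁` from strategies of `G` to strategies of the graph
of best alternatives `G'`: it simulates the given strategy on first projections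
while tracking the minimal best alternative seen so far. -/
noncomputable def Phi1 (A : Arena S) (μ : S → ℕ) (C : Set S) (σ : Strat S) :
    Strat (S × ℕ∞) :=
  fun l =>
    let h := l.map Prod.fst
    let s := σ h
    (s, A.baPath μ C (h ++ [s]))

end Arena

theorem test2 : True := trivial

namespace Arena

variable {S : Type}

/-- The graph of utility of a weighted arena: positions are enriched with the
accumulated Player-1 weight, bounded by `B`. -/
def utilArena (A : Arena S) (w : S → S → ℕ) (B : ℕ) : Arena (S × ℕ) where
  owner := fun p => A.owner p.1
  init := (A.init, 0)
  edge := fun p q => A.edge p.1 q.1 ∧ q.2 = p.2 + w p.1 q.1 ∧ q.2 ≤ B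

/-- Targets of the graph of utility: target positions reached with accumulated
weight at most `B`, whose target weight is that accumulated weight. -/
def utilTargets (C : Set S) (B : ℕ) : Set (S × ℕ) := {p | p.1 ∈ C ∧ p.2 ≤ B}

/-- The map `Φ` from strategies of `G` to strategies of the graph of utility:
simulate on first projections while tracking the accumulated weight. -/
def PhiU (w : S → S → ℕ) (σ : Strat S) : Strat (S × ℕ) :=
  fun l =>
    let h := l.map Prod.fst
    let s := σ h
    (s, pathWeight w (h ++ [s]))

end Arena

/-!
Under `Φ`, the outcome in the graph of utility is the outcome in `G` with each position paired
with the weight accumulated so far. Since weights are natural numbers this accumulated weight is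
monotone, so as soon as some target is reached within budget `B` (or the utility is at most `B`)
the first visit to `C` in `G` already happens within budget; it is then also the first visit to
the targets of `G'`, and both utilities are the weight accumulated up to it.
-/

namespace Arena

variable {S : Type}

section PathWeight

variable (w : S → S → ℕ)

theorem pathWeight_cons_cons (a b : S) (l : List S) :
    pathWeight w (a :: b :: l) = w a b + pathWeight w (b :: l) := by
  simp [pathWeight]

theorem pathWeight_le_pathWeight_append : ∀ l t : List S, pathWeight w l ≤ pathWeight w (l ++ t)
  | [], _ => Nat.zero_le _
  | [_], _ => by simp [pathWeight]
  | a :: b :: l, t => by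
    rw [List.cons_append, List.cons_append, pathWeight_cons_cons, pathWeight_cons_cons]
    exact Nat.add_le_add_left (pathWeight_le_pathWeight_append (b :: l) t) _

theorem monotone_pathWeight_outList (A : Arena S) (σ : Bool → Strat S) :
    Monotone fun n => pathWeight w (A.outList σ n) :=
  monotone_nat_of_le_succ fun _ => pathWeight_le_pathWeight_append w _ _

end PathWeight

theorem outList_succ (A : Arena S) (σ : Bool → Strat S) (n : ℕ) :
    A.outList σ (n + 1) = A.outList σ n ++ [σ (A.owner (A.cur σ n)) (A.outList σ n)] :=
  rfl

theorem cur_succ (A : Arena S) (σ : Bool → Strat S) (n : ℕ) :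
    A.cur σ (n + 1) = σ (A.owner (A.cur σ n)) (A.outList σ n) :=
  List.getLastD_concat

section FirstVisit

variable {A : Arena S} {C : Set S} {σ : Bool → Strat S}

theorem exists_firstVisit_le {n : ℕ} (h : A.cur σ n ∈ C) : ∃ m ≤ n, A.firstVisit C σ m := by
  classical
  have hex : ∃ m, A.cur σ m ∈ C := ⟨n, h⟩
  exact ⟨Nat.find hex, Nat.find_min' hex h, Nat.find_spec hex, fun _ => Nat.find_min hex⟩

theorem firstVisit.unique {m n : ℕ} (hm : A.firstVisit C σ m) (hn : A.firstVisit C σ n) :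
    m = n := by
  rcases lt_trichotomy m n with hmn | hmn | hmn
  · exact absurd hm.1 (hn.2 m hmn)
  · exact hmn
  · exact absurd hn.1 (hm.2 n hmn)

theorem iInf_firstVisit_eq {n : ℕ} (hn : A.firstVisit C σ n) (f : ℕ → ℕ∞) :
    ⨅ (m : ℕ) (_ : A.firstVisit C σ m), f m = f n :=
  le_antisymm (iInf₂_le n hn) (le_iInf₂ fun _ hm => (hm.unique hn) ▸ le_rfl)

theorem util_eq_of_firstVisit (w : S → S → ℕ) {n : ℕ} (hn : A.firstVisit C σ n) :
    A.util w C σ = pathWeight w (A.outList σ n) :=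
  iInf_firstVisit_eq hn _

theorem utilT_eq_of_firstVisit (μ : S → ℕ∞) {n : ℕ} (hn : A.firstVisit C σ n) :
    A.utilT μ C σ = μ (A.cur σ n) :=
  iInf_firstVisit_eq hn _

theorem exists_firstVisit_of_util_ne_top {w : S → S → ℕ} (h : A.util w C σ ≠ ⊤) :
    ∃ n, A.firstVisit C σ n := by
  by_contra! hnone
  exact h (by simp [util, hnone])

end FirstVisit

section UtilArena

variable (A : Arena S) (w : S → S → ℕ) (B : ℕ) (σ : Bool → Strat S)

theorem pairFor_PhiU (i : Bool) (σi σo : Strat S) :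
    pairFor i (PhiU w σi) (PhiU w σo) = fun b => PhiU w (pairFor i σi σo b) :=
  funext fun b => (apply_ite (PhiU w) (b = i) σi σo).symm

theorem map_fst_outList_utilArena (n : ℕ) :
    ((A.utilArena w B).outList (fun b => PhiU w (σ b)) n).map Prod.fst = A.outList σ n := by
  induction n with
  | zero => rfl
  | succ n ih =>
    have hfst : ((A.utilArena w B).cur (fun b => PhiU w (σ b)) n).1 = A.cur σ n := by
      rw [cur, ← List.getLastD_map (f := Prod.fst), ih]
      rfl
    rw [outList_succ, outList_succ, List.map_append, ih]
    simp only [List.map_cons, List.map_nil, PhiU, ih, ← hfst]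
    rfl

theorem fst_cur_utilArena (n : ℕ) :
    ((A.utilArena w B).cur (fun b => PhiU w (σ b)) n).1 = A.cur σ n := by
  rw [cur, ← List.getLastD_map (f := Prod.fst), map_fst_outList_utilArena]
  rfl

theorem cur_utilArena (n : ℕ) :
    (A.utilArena w B).cur (fun b => PhiU w (σ b)) n =
      (A.cur σ n, pathWeight w (A.outList σ n)) := by
  cases n with
  | zero => rfl
  | succ n =>
    have howner : (A.utilArena w B).owner ((A.utilArena w B).cur (fun b => PhiU w (σ b)) n) =
        A.owner (A.cur σ n) :=
      congrArg A.owner (fst_cur_utilArena A w B σ n)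
    rw [cur_succ, cur_succ, howner, outList_succ]
    simp only [PhiU, map_fst_outList_utilArena]

variable {A w B σ} {C : Set S} {n : ℕ}

theorem firstVisit_utilArena (hn : A.firstVisit C σ n)
    (hB : pathWeight w (A.outList σ n) ≤ B) :
    (A.utilArena w B).firstVisit (utilTargets C B) (fun b => PhiU w (σ b)) n := by
  refine ⟨?_, fun m hm hmem => hn.2 m hm ?_⟩
  · rw [cur_utilArena]
    exact ⟨hn.1, hB⟩
  · rw [cur_utilArena] at hmem
    exact hmem.1

theorem util_eq_utilT_utilArena (hn : A.firstVisit C σ n)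
    (hB : pathWeight w (A.outList σ n) ≤ B) :
    A.util w C σ =
      (A.utilArena w B).utilT (fun p => (p.2 : ℕ∞)) (utilTargets C B) fun b => PhiU w (σ b) := by
  rw [util_eq_of_firstVisit w hn, utilT_eq_of_firstVisit _ (firstVisit_utilArena hn hB),
    cur_utilArena]

end UtilArena

end Arena

/-- If the outcome of `(Φ(λ₁), Φ(λ₂))` in the graph of utility
`G'` is winning for Player 1, or `u₁^G(λ₁,λ₂) ≤ B`, then the utilities in `G`
and `G'` coincide. -/
theorem util_eq_utilArena {S : Type} (A : Arena S) (w : S → S → ℕ) (C : Set S)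
    (B : ℕ) (σ1 σ2 : Strat S) :
    ((∃ n : ℕ, (A.utilArena w B).cur
        (Arena.pairFor true (Arena.PhiU w σ1) (Arena.PhiU w σ2)) n ∈
          Arena.utilTargets C B) ∨
      A.util w C (Arena.pairFor true σ1 σ2) ≤ (B : ℕ∞)) →
    A.util w C (Arena.pairFor true σ1 σ2) =
      (A.utilArena w B).utilT (fun p => (p.2 : ℕ∞)) (Arena.utilTargets C B)
        (Arena.pairFor true (Arena.PhiU w σ1) (Arena.PhiU w σ2)) := by
  intro h
  rw [Arena.pairFor_PhiU] at h ⊢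
  set σ := Arena.pairFor true σ1 σ2
  obtain ⟨n, hn, hB⟩ : ∃ n, A.firstVisit C σ n ∧ Arena.pathWeight w (A.outList σ n) ≤ B := by
    rcases h with ⟨m, hm⟩ | hle
    · rw [Arena.cur_utilArena] at hm
      obtain ⟨n, hnm, hn⟩ := Arena.exists_firstVisit_le hm.1
      exact ⟨n, hn, (Arena.monotone_pathWeight_outList w A σ hnm).trans hm.2⟩
    · obtain ⟨n, hn⟩ :=
        Arena.exists_firstVisit_of_util_ne_top (ne_top_of_le_ne_top (ENat.natCast_ne_top B) hle)
      rw [Arena.util_eq_of_firstVisit w hn] at hle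
      exact ⟨n, hn, ENat.natCast_le_natCast.mp hle⟩
  exact Arena.util_eq_utilT_utilArena hn hB
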